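/- Let (Ω = {1,…,k}, μ) be a probability space with all atoms positive, and (X_0 ≡ 1, X_1,…,X_{k−1}) an orthonormal basis of L²(μ) as above. For ℓ ∈ {1,…,n}, let f^{dict,ℓ}: Ω^n → Δ_k be the dictatorship f^{dict,ℓ}(ω) = e_i iff ω_ℓ = i, with components f_i. Let B = (⟨v_i, v_j⟩) be a k×k Gram matrix. Then the level-one objective OBJ(f^{dict,ℓ}) := Σ_{i,j} b_{ij} Σ_{|σ|=1} f̂_i(σ) f̂_j(σ) equals Σ_{i=1}^k μ(i) ‖v_i − Σ_{j=1}^k μ(j) v_j‖². -/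

import Mathlib

open RealInnerProductSpace

/-!
Integrating out the coordinates `t ≠ ℓ` of the Fourier coefficient of the `i`-th component of the
dictatorship leaves `μ i X_{σ_ℓ}(i)` when `σ` is supported in `{ℓ}` and `0` otherwise, since every
nonconstant `X_r` has mean zero. Summing the products of these coefficients over `σ_ℓ ≠ 0`, the
completeness relation turns the level-one part into the covariance matrix `δ_ij μ(i) − μ(i) μ(j)` of
the indicators `1_{ω = i}`. Pairing this matrix with the Gram matrix of the `v_i` gives the
`μ`-variance `Σ_i μ(i) ‖v_i − Σ_j μ(j) v_j‖²`.
-/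

open Finset Function

section Fourier

variable {ι Ω R : Type*} [Fintype ι] [DecidableEq ι]

theorem sum_prod_mul_ite_apply_eq [Fintype Ω] [DecidableEq Ω] {M : Type*} [CommSemiring M]
    (g : ι → Ω → M) (ℓ : ι) (i : Ω) :
    ∑ ω : ι → Ω, (∏ t, g t (ω t)) * (if ω ℓ = i then 1 else 0) =
      g ℓ i * ∏ t ∈ univ.erase ℓ, ∑ a, g t a := by
  set h : ι → Ω → M := fun t a => if t = ℓ ∧ a ≠ i then 0 else g t a
  have h_off : ∀ t ∈ univ.erase ℓ, ∀ a, h t a = g t a := fun t ht a =>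
    if_neg fun hc => ne_of_mem_erase ht hc.1
  have hsummand : ∀ ω : ι → Ω,
      (∏ t, g t (ω t)) * (if ω ℓ = i then 1 else 0) = ∏ t, h t (ω t) := by
    intro ω
    rw [← mul_prod_erase univ _ (mem_univ ℓ),
      ← mul_prod_erase univ (fun t => h t (ω t)) (mem_univ ℓ),
      prod_congr rfl fun t ht => h_off t ht (ω t)]
    by_cases hω : ω ℓ = i <;> simp [h, hω]
  rw [sum_congr rfl fun ω _ => hsummand ω, ← Fintype.prod_sum,
    ← mul_prod_erase univ _ (mem_univ ℓ),
    prod_congr rfl fun t ht => sum_congr rfl fun a _ => h_off t ht a]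
  simp [h]

theorem sum_dictator_mul_prod_basis [Fintype Ω] [DecidableEq Ω] [DecidableEq R]
    (μ : Ω → ℝ) (X : R → Ω → ℝ) (z : R)
    (hmean : ∀ r, ∑ a, μ a * X r a = if r = z then 1 else 0) (ℓ : ι) (i : Ω) (σ : ι → R) :
    ∑ ω : ι → Ω, (∏ t, μ (ω t)) * (if ω ℓ = i then 1 else 0) * ∏ t, X (σ t) (ω t) =
      μ i * X (σ ℓ) i * if ∀ t ≠ ℓ, σ t = z then 1 else 0 := by
  have hsummand : ∀ ω : ι → Ω,
      (∏ t, μ (ω t)) * (if ω ℓ = i then 1 else 0) * ∏ t, X (σ t) (ω t) =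
        (∏ t, μ (ω t) * X (σ t) (ω t)) * (if ω ℓ = i then 1 else 0) := by
    intro ω
    rw [prod_mul_distrib]
    ring
  rw [sum_congr rfl fun ω _ => hsummand ω,
    sum_prod_mul_ite_apply_eq (fun t a => μ a * X (σ t) a),
    prod_congr rfl fun t _ => hmean (σ t), prod_boole]
  simp

variable [DecidableEq R]

theorem card_filter_ne_eq_one_iff {z : R} {ℓ : ι} {σ : ι → R} (hσ : ∀ t ≠ ℓ, σ t = z) :
    #(univ.filter fun t => σ t ≠ z) = 1 ↔ σ ℓ ≠ z := by
  have hsupp : (univ.filter fun t => σ t ≠ z) = if σ ℓ = z then ∅ else {ℓ} := by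
    ext t
    by_cases ht : t = ℓ
    · subst ht
      split_ifs <;> simp [*]
    · split_ifs <;> simp [ht, hσ t ht]
  rw [hsupp]
  split_ifs <;> simp [*]

variable [Fintype R]

def levelOne (z : R) : Finset (ι → R) :=
  univ.filter fun σ => #(univ.filter fun t => σ t ≠ z) = 1

theorem sum_levelOne_ite_eq {M : Type*} [AddCommMonoid M] (z : R) (ℓ : ι) (F : (ι → R) → M) :
    ∑ σ ∈ levelOne z, (if ∀ t ≠ ℓ, σ t = z then F σ else 0) =
      ∑ r ∈ univ.erase z, F (update (fun _ => z) ℓ r) := by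
  have hmem : ∀ σ : ι → R, σ ∈ (levelOne z).filter (fun σ => ∀ t ≠ ℓ, σ t = z) ↔
      σ ℓ ≠ z ∧ ∀ t ≠ ℓ, σ t = z := fun σ => by
    rw [mem_filter, levelOne, mem_filter]
    exact ⟨fun h => ⟨(card_filter_ne_eq_one_iff h.2).1 h.1.2, h.2⟩,
      fun h => ⟨⟨mem_univ σ, (card_filter_ne_eq_one_iff h.2).2 h.1⟩, h.2⟩⟩
  have hupdate : ∀ σ ∈ (levelOne z).filter (fun σ => ∀ t ≠ ℓ, σ t = z),
      σ = update (fun _ => z) ℓ (σ ℓ) := fun σ hσ =>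
    eq_update_iff.2 ⟨rfl, ((hmem σ).1 hσ).2⟩
  rw [← sum_filter]
  apply sum_nbij' (· ℓ) (update (fun _ => z) ℓ)
  · intro σ hσ
    simpa using ((hmem σ).1 hσ).1
  · intro r hr
    rw [hmem]
    exact ⟨by simpa using ne_of_mem_erase hr, fun t ht => update_of_ne ht _ _⟩
  · intro σ hσ
    exact (hupdate σ hσ).symm
  · intro r _
    simp
  · intro σ hσ
    exact congrArg F (hupdate σ hσ)

theorem sum_levelOne_dictator_coeff_mul [DecidableEq Ω] (μ : Ω → ℝ) (X : R → Ω → ℝ) (z : R)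
    (hXz : X z = fun _ => 1)
    (hcomp : ∀ a b, ∑ r, X r a * X r b = if a = b then 1 / μ a else 0) (ℓ : ι) (i j : Ω) :
    ∑ σ ∈ levelOne z, (μ i * X (σ ℓ) i * if ∀ t ≠ ℓ, σ t = z then 1 else 0) *
        (μ j * X (σ ℓ) j * if ∀ t ≠ ℓ, σ t = z then 1 else 0) =
      (if i = j then μ i else 0) - μ i * μ j := by
  have hsummand : ∀ σ : ι → R, (μ i * X (σ ℓ) i * if ∀ t ≠ ℓ, σ t = z then 1 else 0) *
      (μ j * X (σ ℓ) j * if ∀ t ≠ ℓ, σ t = z then 1 else 0) =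
        if ∀ t ≠ ℓ, σ t = z then μ i * μ j * (X (σ ℓ) i * X (σ ℓ) j) else 0 := by
    intro σ
    split_ifs <;> ring
  have hcomp_ne : ∑ r ∈ univ.erase z, X r i * X r j = (if i = j then 1 / μ i else 0) - 1 := by
    rw [sum_erase_eq_sub (mem_univ z), hcomp, hXz, mul_one]
  rw [sum_congr rfl fun σ _ => hsummand σ, sum_levelOne_ite_eq]
  simp only [update_self]
  rw [← mul_sum, hcomp_ne, mul_sub, mul_one]
  congr 1
  split_ifs with hij
  · rw [hij, one_div, mul_self_mul_inv]
  · rw [mul_zero]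

end Fourier

section Variance

variable {ι E : Type*} [Fintype ι] [NormedAddCommGroup E] [InnerProductSpace ℝ E]

theorem sum_mul_inner_sum_smul (μ : ι → ℝ) (v : ι → E) (w : E) :
    ∑ i, μ i * ⟪v i, w⟫ = ⟪∑ i, μ i • v i, w⟫ := by
  simp only [sum_inner, real_inner_smul_left]

theorem norm_sum_smul_sq (μ : ι → ℝ) (v : ι → E) :
    ‖∑ i, μ i • v i‖ ^ 2 = ∑ i, ∑ j, μ i * μ j * ⟪v i, v j⟫ := by
  rw [← real_inner_self_eq_norm_sq, ← sum_mul_inner_sum_smul]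
  simp only [inner_sum, real_inner_smul_right, mul_sum, mul_assoc]

theorem sum_mul_norm_sub_sum_smul_sq (μ : ι → ℝ) (hμ : ∑ i, μ i = 1) (v : ι → E) :
    ∑ i, μ i * ‖v i - ∑ j, μ j • v j‖ ^ 2 = ∑ i, μ i * ‖v i‖ ^ 2 - ‖∑ j, μ j • v j‖ ^ 2 := by
  set m := ∑ j, μ j • v j
  have hcross : ∑ i, μ i * ⟪v i, m⟫ = ‖m‖ ^ 2 := by
    rw [sum_mul_inner_sum_smul, real_inner_self_eq_norm_sq]
  calc ∑ i, μ i * ‖v i - m‖ ^ 2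
      = ∑ i, μ i * ‖v i‖ ^ 2 - 2 * ∑ i, μ i * ⟪v i, m⟫ + (∑ i, μ i) * ‖m‖ ^ 2 := by
        simp only [norm_sub_sq_real, mul_add, mul_sub, sum_add_distrib, sum_sub_distrib, mul_sum,
          sum_mul]
        congr 2
        exact sum_congr rfl fun i _ => by ring
    _ = ∑ i, μ i * ‖v i‖ ^ 2 - ‖m‖ ^ 2 := by
        rw [hcross, hμ]
        ring

theorem sum_inner_mul_covariance [DecidableEq ι] (μ : ι → ℝ) (hμ : ∑ i, μ i = 1) (v : ι → E) :
    ∑ i, ∑ j, ⟪v i, v j⟫ * ((if i = j then μ i else 0) - μ i * μ j) =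
      ∑ i, μ i * ‖v i - ∑ j, μ j • v j‖ ^ 2 := by
  rw [sum_mul_norm_sub_sum_smul_sq μ hμ, norm_sum_smul_sq]
  simp only [mul_sub, sum_sub_distrib, mul_ite, mul_zero, sum_ite_eq, mem_univ, if_true,
    real_inner_self_eq_norm_sq]
  congr 1
  · exact sum_congr rfl fun i _ => mul_comm _ _
  · exact sum_congr rfl fun i _ => sum_congr rfl fun j _ => by ring

end Variance

theorem dictatorship_objective_general (k n : ℕ) (hk : 0 < k)
    (μ : Fin k → ℝ) (hsum : ∑ ω, μ ω = 1)
    (X : Fin k → Fin k → ℝ) (hX0 : X ⟨0, hk⟩ = fun _ => 1)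
    (horth : ∀ i j, ∑ ω, μ ω * (X i ω * X j ω) = if i = j then 1 else 0)
    (hcomp : ∀ ω ω', ∑ i, X i ω * X i ω' = if ω = ω' then 1 / μ ω else 0)
    (v : Fin k → EuclideanSpace ℝ (Fin k)) (b : Fin k → Fin k → ℝ)
    (hb : ∀ i j, b i j = ⟪v i, v j⟫)
    (ℓ : Fin n)
    (f : Fin k → (Fin n → Fin k) → ℝ)
    (hf : ∀ i ω, f i ω = if ω ℓ = i then 1 else 0)
    (coeff : Fin k → (Fin n → Fin k) → ℝ)
    (hcoeff : ∀ i σ, coeff i σ =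
      ∑ ω : Fin n → Fin k, (∏ t, μ (ω t)) * f i ω * ∏ t, X (σ t) (ω t)) :
    ∑ i, ∑ j, b i j *
        ∑ σ ∈ Finset.univ.filter (fun σ : Fin n → Fin k =>
          (Finset.univ.filter fun t => σ t ≠ ⟨0, hk⟩).card = 1),
          coeff i σ * coeff j σ =
      ∑ i, μ i * ‖v i - ∑ j, μ j • v j‖ ^ 2 := by
  set z : Fin k := ⟨0, hk⟩
  have hmean : ∀ r, ∑ a, μ a * X r a = if r = z then 1 else 0 := fun r => by
    simpa [hX0, eq_comm] using horth z r
  have hlevel : ∀ i j, ∑ σ ∈ levelOne z, coeff i σ * coeff j σ =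
      (if i = j then μ i else 0) - μ i * μ j := fun i j => by
    simp only [hcoeff, hf, sum_dictator_mul_prod_basis μ X z hmean]
    exact sum_levelOne_dictator_coeff_mul μ X z hX0 hcomp ℓ i j
  calc _ = ∑ i, ∑ j, ⟪v i, v j⟫ * ((if i = j then μ i else 0) - μ i * μ j) := by
        simp only [hb, ← hlevel]
        rfl
    _ = _ := sum_inner_mul_covariance μ hsum v

/-- The level-one Fourier objective of the dictatorship `f^{dict,ℓ}` on `(Ω^n, μ^n)` equals
`Σ_i μ(i) ‖v_i − Σ_j μ(j) v_j‖²`. -/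
theorem dictatorship_objective (k n : ℕ) (hk : 0 < k)
    (μ : Fin k → ℝ) (hpos : ∀ ω, 0 < μ ω) (hsum : ∑ ω, μ ω = 1)
    (X : Fin k → Fin k → ℝ) (hX0 : X ⟨0, hk⟩ = fun _ => 1)
    (horth : ∀ i j, ∑ ω, μ ω * (X i ω * X j ω) = if i = j then 1 else 0)
    (hcomp : ∀ ω ω', ∑ i, X i ω * X i ω' = if ω = ω' then 1 / μ ω else 0)
    (v : Fin k → EuclideanSpace ℝ (Fin k)) (b : Fin k → Fin k → ℝ)
    (hb : ∀ i j, b i j = ⟪v i, v j⟫)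
    (ℓ : Fin n)
    (f : Fin k → (Fin n → Fin k) → ℝ)
    (hf : ∀ i ω, f i ω = if ω ℓ = i then 1 else 0)
    (coeff : Fin k → (Fin n → Fin k) → ℝ)
    (hcoeff : ∀ i σ, coeff i σ =
      ∑ ω : Fin n → Fin k, (∏ t, μ (ω t)) * f i ω * ∏ t, X (σ t) (ω t)) :
    ∑ i, ∑ j, b i j *
        ∑ σ ∈ Finset.univ.filter (fun σ : Fin n → Fin k =>
          (Finset.univ.filter fun t => σ t ≠ ⟨0, hk⟩).card = 1),
          coeff i σ * coeff j σ =
      ∑ i, μ i * ‖v i - ∑ j, μ j • v j‖ ^ 2 :=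
  dictatorship_objective_general k n hk μ hsum X hX0 horth hcomp v b hb ℓ f hf coeff hcoeff
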